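/- Let a, b, k ≥ 0 be integers and let λ = (a + b, a, 0). Then the key polynomial κ_{kλ, σ} for σ = [3,1,2] ∈ S_3 (with reduced word σ = s_2 s_1, so κ_{kλ,σ} = π_2(π_1(z_1^{k(a+b)} z_2^{ka}))) evaluated at z_1 = z_2 = z_3 = 1 equals (1/2)(bk + 1)(2ak + bk + 2), where kλ = (k(a+b), ka, 0). -/

import Mathlib

/-!
If `c` is symmetric in `z_u, z_v`, the telescoping identity
`(x - y) · Σ_{j ≤ d} y^j x^(d-j) = x^(d+1) - y^(d+1)` gives
`π(c · z_u^d) = c · Σ_{j ≤ d} z_v^j z_u^(d-j)`. With `q = ka`, `d = kb`, writing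
`z_1^(q+d) z_2^q = (z_1 z_2)^q · z_1^d` yields
`π_1(z_1^(q+d) z_2^q) = Σ_{j ≤ d} z_1^(q+d-j) z_2^(q+j)`, and `π_2` applied to each
term (with `c = z_1^(q+d-j)`) expands `z_2^(q+j)` into `q + j + 1` monomials.
At `z = 1` the value is `Σ_{j ≤ d} (q + j + 1) = (d + 1)(2q + d + 2)/2`.
-/

open MvPolynomial
open scoped Classical

/-- The Demazure operator `π_i(f) = ∂_i(z_i · f)` on `ℚ[z_1, …, z_n]`, where
`∂_i(h) = (h − s_i(h))/(z_i − z_{i+1})` and `s_i` swaps the variables `z_i` and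
`z_{i+1}` (indices are `0`-based, so `i` ranges over `0, …, n − 2`).  Since
`z_i − z_{i+1}` always divides `z_i·f − s_i(z_i·f)` and quotients are unique in the
integral domain `ℚ[z_1, …, z_n]`, the value below is the unique polynomial `g` with
`(z_i − z_{i+1})·g = z_i·f − s_i(z_i·f)`. -/
noncomputable def piOp (n : ℕ) (i : ℕ) (f : MvPolynomial (Fin n) ℚ) :
    MvPolynomial (Fin n) ℚ :=
  if h : i + 1 < n then
    if hg : ∃ g : MvPolynomial (Fin n) ℚ,
        (X (⟨i, Nat.lt_of_succ_lt h⟩ : Fin n) - X (⟨i + 1, h⟩ : Fin n)) * g =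
          X (⟨i, Nat.lt_of_succ_lt h⟩ : Fin n) * f -
            rename (Equiv.swap (⟨i, Nat.lt_of_succ_lt h⟩ : Fin n) (⟨i + 1, h⟩ : Fin n))
              (X (⟨i, Nat.lt_of_succ_lt h⟩ : Fin n) * f)
    then hg.choose else 0
  else 0

open Finset

section DemazureImage

variable {σ R : Type*} [DecidableEq σ] [CommRing R]

def IsDemazureImage (u v : σ) (f g : MvPolynomial σ R) : Prop :=
  (X u - X v) * g = X u * f - rename (Equiv.swap u v) (X u * f)

theorem IsDemazureImage.sum {ι : Type*} {u v : σ} (s : Finset ι)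
    {f g : ι → MvPolynomial σ R} (h : ∀ j ∈ s, IsDemazureImage u v (f j) (g j)) :
    IsDemazureImage u v (∑ j ∈ s, f j) (∑ j ∈ s, g j) := by
  unfold IsDemazureImage at h ⊢
  simp only [mul_sum, map_sum, ← sum_sub_distrib]
  exact sum_congr rfl h

theorem isDemazureImage_mul_X_pow {u v : σ} {c : MvPolynomial σ R}
    (hc : rename (Equiv.swap u v) c = c) (d : ℕ) :
    IsDemazureImage u v (c * X u ^ d) (c * ∑ i ∈ range (d + 1), X v ^ i * X u ^ (d - i)) := by
  have hgeom := (Commute.all (X u : MvPolynomial σ R) (X v)).mul_geom_sum₂ (d + 1)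
  rw [geom_sum₂_comm, Nat.add_sub_cancel] at hgeom
  unfold IsDemazureImage
  simp only [map_mul, map_pow, rename_X, Equiv.swap_apply_left, hc]
  linear_combination c * hgeom

end DemazureImage

theorem piOp_eq_of_isDemazureImage {n i : ℕ} (h : i + 1 < n) {f g : MvPolynomial (Fin n) ℚ}
    (hg : IsDemazureImage ⟨i, Nat.lt_of_succ_lt h⟩ ⟨i + 1, h⟩ f g) : piOp n i f = g := by
  have hne : (X ⟨i, Nat.lt_of_succ_lt h⟩ - X ⟨i + 1, h⟩ : MvPolynomial (Fin n) ℚ) ≠ 0 :=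
    sub_ne_zero.mpr fun he => by simpa [Fin.ext_iff] using X_injective he
  have hex : ∃ g', IsDemazureImage ⟨i, Nat.lt_of_succ_lt h⟩ ⟨i + 1, h⟩ f g' := ⟨g, hg⟩
  unfold IsDemazureImage at hex hg
  unfold piOp
  rw [dif_pos h, dif_pos hex]
  exact mul_left_cancel₀ hne (hex.choose_spec.trans hg.symm)

theorem two_mul_sum_range_succ_add (c n : ℕ) :
    2 * ∑ j ∈ range (n + 1), (c + j) = (n + 1) * (2 * c + n) := by
  induction n with
  | zero => simp
  | succ n ih => rw [sum_range_succ, mul_add, ih]; ring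

theorem piOp_zero_X_pow_mul_X_pow (q d : ℕ) :
    piOp 3 0 (X 0 ^ (q + d) * X 1 ^ q) =
      ∑ j ∈ range (d + 1), X 0 ^ (q + (d - j)) * X 1 ^ (q + j) := by
  have hc : rename (Equiv.swap (0 : Fin 3) 1) (X 0 ^ q * X 1 ^ q : MvPolynomial (Fin 3) ℚ) =
      X 0 ^ q * X 1 ^ q := by
    simp only [map_mul, map_pow, rename_X, Equiv.swap_apply_left, Equiv.swap_apply_right,
      mul_comm]
  rw [show (X 0 ^ (q + d) * X 1 ^ q : MvPolynomial (Fin 3) ℚ) = X 0 ^ q * X 1 ^ q * X 0 ^ d by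
      ring, piOp_eq_of_isDemazureImage (by norm_num) (isDemazureImage_mul_X_pow hc d), mul_sum]
  exact sum_congr rfl fun j _ => by ring

theorem piOp_one_sum_X_pow_mul_X_pow (q d : ℕ) :
    piOp 3 1 (∑ j ∈ range (d + 1), X 0 ^ (q + (d - j)) * X 1 ^ (q + j)) =
      ∑ j ∈ range (d + 1),
        X 0 ^ (q + (d - j)) * ∑ t ∈ range (q + j + 1), X 2 ^ t * X 1 ^ (q + j - t) := by
  refine piOp_eq_of_isDemazureImage (by norm_num) (IsDemazureImage.sum _ fun j _ => ?_)
  refine isDemazureImage_mul_X_pow ?_ (q + j)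
  simp only [map_pow, rename_X]
  rfl

theorem eval_one_piOp_one_piOp_zero (q d : ℕ) :
    eval (fun _ : Fin 3 => (1 : ℚ)) (piOp 3 1 (piOp 3 0 (X 0 ^ (q + d) * X 1 ^ q))) =
      (d + 1) * (2 * q + d + 2) / 2 := by
  rw [piOp_zero_X_pow_mul_X_pow, piOp_one_sum_X_pow_mul_X_pow]
  simp only [map_sum, map_mul, map_pow, eval_X, one_pow, mul_one, one_mul, sum_const,
    card_range, nsmul_eq_mul, Nat.cast_add, Nat.cast_one]
  have h := two_mul_sum_range_succ_add (q + 1) d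
  rw [eq_div_iff two_ne_zero, mul_comm]
  exact_mod_cast (show 2 * ∑ j ∈ range (d + 1), (q + j + 1) = (d + 1) * (2 * q + d + 2) by
    simpa only [add_right_comm, mul_add, mul_one, add_assoc] using h)

/-- For `λ = (a+b, a, 0)` and `σ = [3,1,2] = s_2 s_1 ∈ S_3` (in the `0`-based indexing
used here, `π_2 = piOp 3 1` and `π_1 = piOp 3 0`), the key polynomial
`κ_{kλ,σ} = π_2(π_1(z_1^{k(a+b)} z_2^{ka}))` evaluated at `z_1 = z_2 = z_3 = 1` equals
`(1/2)(bk + 1)(2ak + bk + 2)`. -/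
theorem key_312_eval_ones (a b k : ℕ) :
    MvPolynomial.eval (fun _ : Fin 3 => (1 : ℚ))
        (piOp 3 1 (piOp 3 0
          (X (0 : Fin 3) ^ (k * (a + b)) * X (1 : Fin 3) ^ (k * a)))) =
      ((b : ℚ) * k + 1) * (2 * a * k + (b : ℚ) * k + 2) / 2 := by
  rw [mul_add, eval_one_piOp_one_piOp_zero]
  push_cast
  ring
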